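/- arXiv:1902.00745 — 5 statements merged into one kernel-verified Lean document; each statement's English description precedes it below -/
import Mathlib

section
/- Let p be a prime and D ≥ 2 an integer with p ∤ D. Then for every integer 1 ≤ v ≤ D−1, one has v_p( D^p (B_p(v/D) − B_p) ) ≥ 1; in other words, D^p(B_p(v/D) − B_p) ≡ 0 (mod p) in the p-adic sense. -/
open Finset

namespace PadicBernoulliAux

variable {p : ℕ} [hp : Fact p.Prime]

lemma norm_add_le {a b t : ℚ} (ha : padicNorm p a ≤ t) (hb : padicNorm p b ≤ t) :
    padicNorm p (a + b) ≤ t :=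
  le_trans padicNorm.nonarchimedean (max_le ha hb)

lemma norm_sub_le {a b t : ℚ} (ha : padicNorm p a ≤ t) (hb : padicNorm p b ≤ t) :
    padicNorm p (a - b) ≤ t :=
  le_trans padicNorm.sub (max_le ha hb)

lemma norm_mul_le {a b s t : ℚ} (hs : 0 ≤ s) (ha : padicNorm p a ≤ s) (hb : padicNorm p b ≤ t) :
    padicNorm p (a * b) ≤ s * t := by
  rw [padicNorm.mul]
  exact mul_le_mul ha hb (padicNorm.nonneg _) hs

lemma norm_pow (q : ℚ) (n : ℕ) : padicNorm p (q ^ n) = padicNorm p q ^ n := by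
  induction n with
  | zero => simp [padicNorm.one]
  | succ n ih => rw [pow_succ, pow_succ, padicNorm.mul, ih]

lemma norm_int_le_inv {z : ℤ} (h : (p : ℤ) ∣ z) : padicNorm p (z : ℚ) ≤ (p : ℚ)⁻¹ := by
  have h1 : ((p : ℕ) : ℤ) ^ 1 ∣ z := by simpa using h
  have := (padicNorm.dvd_iff_norm_le (p := p) (n := 1) (z := z)).mp (by exact_mod_cast h1)
  simpa [zpow_neg] using this

lemma norm_nat_le_inv {z : ℕ} (h : p ∣ z) : padicNorm p (z : ℚ) ≤ (p : ℚ)⁻¹ := by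
  have := norm_int_le_inv (p := p) (z := (z : ℤ)) (by exact_mod_cast h)
  simpa using this

lemma sum_range_eq_sum_zmod (f : ZMod p → ZMod p) :
    ∑ k ∈ range p, f (k : ZMod p) = ∑ x : ZMod p, f x := by
  haveI : NeZero p := ⟨hp.out.ne_zero⟩
  refine Finset.sum_nbij' (fun k => (k : ZMod p)) (fun x => x.val) ?_ ?_ ?_ ?_ ?_
  · intro a _; exact mem_univ _
  · intro x _; exact mem_range.mpr (ZMod.val_lt x)
  · intro a ha; exact ZMod.val_cast_of_lt (mem_range.mp ha)
  · intro x _; exact ZMod.natCast_zmod_val x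
  · intro a _; rfl

lemma dvd_sum_pow (i : ℕ) (h2 : i < p - 1) :
    (p : ℤ) ∣ ∑ k ∈ range p, (k : ℤ) ^ i := by
  rw [← ZMod.intCast_zmod_eq_zero_iff_dvd]
  push_cast
  rw [sum_range_eq_sum_zmod (fun x => x ^ i)]
  apply FiniteField.sum_pow_lt_card_sub_one
  rwa [ZMod.card]

lemma dvd_sum_pow_top : (p : ℤ) ∣ (∑ k ∈ range p, (k : ℤ) ^ (p - 1)) + 1 := by
  rw [← ZMod.intCast_zmod_eq_zero_iff_dvd]
  push_cast
  rw [sum_range_eq_sum_zmod (fun x => x ^ (p - 1))]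
  have hp1 : 2 ≤ p := hp.out.two_le
  have h0 : (0 : ZMod p) ^ (p - 1) = 0 := by
    apply zero_pow; omega
  have : ∑ x : ZMod p, x ^ (p - 1) = ∑ x ∈ (univ : Finset (ZMod p)) \ {0}, x ^ (p - 1) := by
    rw [← Finset.sum_sdiff (Finset.subset_univ ({0} : Finset (ZMod p))), sum_singleton, h0,
      add_zero]
  rw [this]
  have heach : ∀ x ∈ (univ : Finset (ZMod p)) \ {0}, x ^ (p - 1) = 1 := by
    intro x hx
    rw [mem_sdiff, mem_singleton] at hx
    exact ZMod.pow_card_sub_one_eq_one hx.2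
  rw [Finset.sum_congr rfl heach, Finset.sum_const, Finset.card_sdiff_of_subset (subset_univ _),
    card_singleton, Finset.card_univ, ZMod.card, nsmul_eq_mul, mul_one]
  have : ((p - 1 : ℕ) : ZMod p) = (p : ZMod p) - 1 := by
    rw [Nat.cast_sub (by omega : 1 ≤ p), Nat.cast_one]
  rw [this, ZMod.natCast_self]
  ring

lemma faulhaber_rearranged (m : ℕ) :
    (p : ℚ) * bernoulli m = (∑ k ∈ range p, (k : ℚ) ^ m)
      - ∑ j ∈ range m, bernoulli j * ((m + 1).choose j) * (p : ℚ) ^ (m + 1 - j) / (m + 1) := by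
  have h := sum_range_pow p m
  rw [Finset.sum_range_succ] at h
  have h1 : m + 1 - m = 1 := by omega
  have hc : (((m + 1).choose m : ℕ) : ℚ) = (m : ℚ) + 1 := by
    rw [Nat.choose_succ_self_right]; push_cast; ring
  rw [h1, hc] at h
  have hm : (m : ℚ) + 1 ≠ 0 := by positivity
  have : bernoulli m * ((m : ℚ) + 1) * (p : ℚ) ^ 1 / ((m : ℚ) + 1) = (p : ℚ) * bernoulli m := by
    field_simp
  rw [this] at h
  push_cast at h ⊢
  linarith [h]

lemma bernoulli_norm_le_one : ∀ i, i ≤ p - 2 → padicNorm p (bernoulli i) ≤ 1 := by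
  intro i
  induction i using Nat.strong_induction_on with
  | _ i IH =>
    intro hi
    have hp2 : 2 ≤ p := hp.out.two_le
    rcases Nat.eq_zero_or_pos i with rfl | hpos
    · simp
    -- i ≥ 1
    have key := faulhaber_rearranged (p := p) i
    have hS : padicNorm p (∑ k ∈ range p, (k : ℚ) ^ i) ≤ (p : ℚ)⁻¹ := by
      have hdvd := dvd_sum_pow (p := p) i (by omega)
      have := norm_int_le_inv (p := p) hdvd
      have hcast : (((∑ k ∈ range p, (k : ℤ) ^ i : ℤ)) : ℚ) = ∑ k ∈ range p, (k : ℚ) ^ i := by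
        push_cast; rfl
      rwa [hcast] at this
    have hT : padicNorm p (∑ j ∈ range i,
        bernoulli j * ((i + 1).choose j) * (p : ℚ) ^ (i + 1 - j) / (i + 1)) ≤ (p : ℚ)⁻¹ := by
      apply padicNorm.sum_le'
      · intro j hj
        rw [mem_range] at hj
        have hd : 1 ≤ i + 1 - j := by omega
        have hnB : padicNorm p (bernoulli j) ≤ 1 := IH j hj (by omega)
        have hnC : padicNorm p (((i + 1).choose j : ℕ) : ℚ) ≤ 1 := padicNorm.of_nat _
        have hnp : padicNorm p ((p : ℚ) ^ (i + 1 - j)) ≤ (p : ℚ)⁻¹ := by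
          rw [norm_pow, padicNorm.padicNorm_p_of_prime]
          calc ((p : ℚ)⁻¹) ^ (i + 1 - j) ≤ ((p : ℚ)⁻¹) ^ 1 := by
                apply pow_le_pow_of_le_one (by positivity)
                · rw [inv_le_one_iff₀]; right; exact_mod_cast hp.out.one_lt.le
                · exact hd
            _ = (p : ℚ)⁻¹ := pow_one _
        have hnd : padicNorm p (((i : ℚ) + 1)) = 1 := by
          have : ¬ p ∣ (i + 1) := by
            intro hdvd
            have := Nat.le_of_dvd (by omega) hdvd
            omega
          have := (padicNorm.nat_eq_one_iff (p := p) (i + 1)).mpr this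
          rwa [Nat.cast_add, Nat.cast_one] at this
        rw [padicNorm.div, hnd, div_one]
        calc padicNorm p (bernoulli j * ((i + 1).choose j) * (p : ℚ) ^ (i + 1 - j))
            ≤ 1 * 1 * (p : ℚ)⁻¹ := by
              apply norm_mul_le (by norm_num)
              · exact norm_mul_le (by norm_num) hnB hnC
              · exact hnp
          _ = (p : ℚ)⁻¹ := by ring
      · positivity
    have hsum : padicNorm p ((p : ℚ) * bernoulli i) ≤ (p : ℚ)⁻¹ := by
      rw [key]; exact norm_sub_le hS hT
    rw [padicNorm.mul, padicNorm.padicNorm_p_of_prime] at hsum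
    have hppos : (0 : ℚ) < (p : ℚ)⁻¹ := by positivity
    have h1 : (p : ℚ)⁻¹ * padicNorm p (bernoulli i) ≤ (p : ℚ)⁻¹ * 1 := by simpa using hsum
    exact le_of_mul_le_mul_left h1 hppos

lemma vonStaudt_mod_p : padicNorm p ((p : ℚ) * bernoulli (p - 1) + 1) ≤ (p : ℚ)⁻¹ := by
  have hp2 : 2 ≤ p := hp.out.two_le
  have hkey := faulhaber_rearranged (p := p) (p - 1)
  have hpp : p - 1 + 1 = p := by omega
  rw [hpp] at hkey
  have hc : ((p - 1 : ℕ) : ℚ) + 1 = (p : ℚ) := by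
    push_cast [Nat.cast_sub (by omega : 1 ≤ p)]; ring
  rw [hc] at hkey
  have hS : padicNorm p ((∑ k ∈ range p, (k : ℚ) ^ (p - 1)) + 1) ≤ (p : ℚ)⁻¹ := by
    have := norm_int_le_inv (p := p) (dvd_sum_pow_top (p := p))
    have hcast : (((∑ k ∈ range p, (k : ℤ) ^ (p - 1)) + 1 : ℤ) : ℚ)
        = (∑ k ∈ range p, (k : ℚ) ^ (p - 1)) + 1 := by push_cast; rfl
    rwa [hcast] at this
  have hT : padicNorm p (∑ j ∈ range (p - 1),
      bernoulli j * (p.choose j) * (p : ℚ) ^ (p - j) / (p : ℚ)) ≤ (p : ℚ)⁻¹ := by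
    apply padicNorm.sum_le'
    · intro j hj
      rw [mem_range] at hj
      have hd : 2 ≤ p - j := by omega
      have hnB : padicNorm p (bernoulli j) ≤ 1 := bernoulli_norm_le_one j (by omega)
      have hnC : padicNorm p ((p.choose j : ℕ) : ℚ) ≤ 1 := padicNorm.of_nat _
      have hnp : padicNorm p ((p : ℚ) ^ (p - j)) ≤ ((p : ℚ)⁻¹) ^ 2 := by
        rw [norm_pow, padicNorm.padicNorm_p_of_prime]
        apply pow_le_pow_of_le_one (by positivity) ?_ hd
        rw [inv_le_one_iff₀]; right; exact_mod_cast hp.out.one_lt.le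
      rw [padicNorm.div, padicNorm.padicNorm_p_of_prime]
      rw [div_le_iff₀ (by positivity)]
      calc padicNorm p (bernoulli j * (p.choose j) * (p : ℚ) ^ (p - j))
          ≤ 1 * 1 * ((p : ℚ)⁻¹) ^ 2 := by
            apply norm_mul_le (by norm_num)
            · exact norm_mul_le (by norm_num) hnB hnC
            · exact hnp
        _ = (p : ℚ)⁻¹ * (p : ℚ)⁻¹ := by ring
    · positivity
  have heq : (p : ℚ) * bernoulli (p - 1) + 1
      = ((∑ k ∈ range p, (k : ℚ) ^ (p - 1)) + 1)
        - ∑ j ∈ range (p - 1), bernoulli j * (p.choose j) * (p : ℚ) ^ (p - j) / (p : ℚ) := by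
    rw [hkey]; ring
  rw [heq]
  exact norm_sub_le hS hT

lemma expand_eval (p D v : ℕ) (hD : (D : ℚ) ≠ 0) :
    (D : ℚ) ^ p * ((Polynomial.bernoulli p).eval ((v : ℚ) / (D : ℚ)) - bernoulli p) =
    ∑ i ∈ range p, bernoulli i * (p.choose i) * (v : ℚ) ^ (p - i) * (D : ℚ) ^ i := by
  rw [Polynomial.bernoulli, Polynomial.eval_finset_sum]
  simp only [Polynomial.eval_monomial]
  rw [Finset.sum_range_succ, Nat.choose_self, Nat.sub_self]
  simp only [pow_zero, Nat.cast_one, mul_one, one_mul]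
  rw [add_sub_cancel_right, Finset.mul_sum]
  apply Finset.sum_congr rfl
  intro i hi
  rw [mem_range] at hi
  have hsplit : i + (p - i) = p := by omega
  rw [div_pow]
  rw [show (D : ℚ) ^ p = (D : ℚ) ^ i * (D : ℚ) ^ (p - i) by rw [← pow_add, hsplit]]
  field_simp

end PadicBernoulliAux

/-- Let `p` be a prime and `D ≥ 2` with `p ∤ D`. Then for every integer `1 ≤ v ≤ D−1`,
`v_p( D^p (B_p(v/D) − B_p) ) ≥ 1`, i.e. `D^p(B_p(v/D) − B_p) ≡ 0 (mod p)` in the `p`-adic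
sense (where `v_p(0) = +∞`, encoded by the left disjunct). -/
theorem padic_val_bernoulli_poly_p (p D v : ℕ) (hp : p.Prime) (hD : 2 ≤ D) (hpD : ¬ p ∣ D)
    (hv1 : 1 ≤ v) (hv2 : v ≤ D - 1) :
    (D : ℚ) ^ p * ((Polynomial.bernoulli p).eval ((v : ℚ) / (D : ℚ)) - bernoulli p) = 0 ∨
    1 ≤ padicValRat p
        ((D : ℚ) ^ p * ((Polynomial.bernoulli p).eval ((v : ℚ) / (D : ℚ)) - bernoulli p)) := by
  haveI : Fact p.Prime := ⟨hp⟩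
  have hp2 : 2 ≤ p := hp.two_le
  have hDne : (D : ℚ) ≠ 0 := Nat.cast_ne_zero.mpr (by omega)
  suffices h : padicNorm p
      ((D : ℚ) ^ p * ((Polynomial.bernoulli p).eval ((v : ℚ) / (D : ℚ)) - bernoulli p))
      ≤ (p : ℚ)⁻¹ by
    by_cases hq : (D : ℚ) ^ p * ((Polynomial.bernoulli p).eval ((v : ℚ) / (D : ℚ))
        - bernoulli p) = 0
    · exact Or.inl hq
    · right
      rw [padicNorm.eq_zpow_of_nonzero hq] at h
      have hp1 : (1 : ℚ) < (p : ℚ) := by exact_mod_cast hp.one_lt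
      rw [show ((p : ℚ))⁻¹ = (p : ℚ) ^ (-1 : ℤ) by simp] at h
      have := (zpow_le_zpow_iff_right₀ hp1).mp h
      linarith
  rw [PadicBernoulliAux.expand_eval p D v hDne]
  set f : ℕ → ℚ := fun i => bernoulli i * (p.choose i) * (v : ℚ) ^ (p - i) * (D : ℚ) ^ i
    with hf
  have hsplit : ∑ i ∈ range p, f i = (f 0 + f (p - 1)) + ∑ i ∈ Ico 1 (p - 1), f i := by
    rw [Finset.range_eq_Ico, Finset.sum_eq_sum_Ico_succ_bot (by omega : 0 < p) f]
    have h1 := Finset.sum_Ico_succ_top (by omega : 1 ≤ p - 1) f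
    rw [show p - 1 + 1 = p from by omega] at h1
    rw [h1]; ring
  rw [hsplit]
  apply PadicBernoulliAux.norm_add_le
  · -- the i = 0 and i = p - 1 terms
    have hf0 : f 0 = (v : ℚ) ^ p := by
      simp [hf]
    have hchoose : (p.choose (p - 1) : ℚ) = (p : ℚ) := by
      have : p.choose (p - 1) = p := by
        calc p.choose (p - 1) = (p - 1 + 1).choose (p - 1) := by
              rw [show p - 1 + 1 = p from by omega]
          _ = p - 1 + 1 := Nat.choose_succ_self_right _
          _ = p := by omega
      exact_mod_cast congrArg (Nat.cast : ℕ → ℚ) this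
    have hfp : f (p - 1) = bernoulli (p - 1) * (p : ℚ) * (v : ℚ) * (D : ℚ) ^ (p - 1) := by
      simp only [hf]
      rw [show p - (p - 1) = 1 from by omega, pow_one, hchoose]
    have hdecomp : f 0 + f (p - 1) = ((v : ℚ) ^ p - (v : ℚ) * (D : ℚ) ^ (p - 1))
        + ((p : ℚ) * bernoulli (p - 1) + 1) * ((v : ℚ) * (D : ℚ) ^ (p - 1)) := by
      rw [hf0, hfp]; ring
    rw [hdecomp]
    apply PadicBernoulliAux.norm_add_le
    · -- Fermat little theorem part
      have hdvd : (p : ℤ) ∣ ((v : ℤ) ^ p - (v : ℤ) * (D : ℤ) ^ (p - 1)) := by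
        rw [← ZMod.intCast_zmod_eq_zero_iff_dvd]
        push_cast
        rw [ZMod.pow_card, ZMod.pow_card_sub_one_eq_one (a := (D : ZMod p)) (by
          rw [Ne, ZMod.natCast_eq_zero_iff]; exact hpD)]
        ring
      have := PadicBernoulliAux.norm_int_le_inv (p := p) hdvd
      have hcast : (((v : ℤ) ^ p - (v : ℤ) * (D : ℤ) ^ (p - 1) : ℤ) : ℚ)
          = (v : ℚ) ^ p - (v : ℚ) * (D : ℚ) ^ (p - 1) := by push_cast; ring
      rwa [hcast] at this
    · -- von Staudt part
      have hD1 : padicNorm p ((D : ℚ) ^ (p - 1)) ≤ 1 := by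
        rw [PadicBernoulliAux.norm_pow (p := p)]
        exact pow_le_one₀ (padicNorm.nonneg _) (padicNorm.of_nat D)
      have h1 : padicNorm p ((v : ℚ) * (D : ℚ) ^ (p - 1)) ≤ 1 := by
        have := PadicBernoulliAux.norm_mul_le (p := p) (by norm_num : (0:ℚ) ≤ 1)
          (padicNorm.of_nat v) hD1
        simpa using this
      have := PadicBernoulliAux.norm_mul_le (p := p) (by positivity : (0:ℚ) ≤ (p:ℚ)⁻¹)
        (PadicBernoulliAux.vonStaudt_mod_p (p := p)) h1
      simpa using this
  · -- middle terms
    apply padicNorm.sum_le'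
    · intro i hi
      rw [mem_Ico] at hi
      have hnB : padicNorm p (bernoulli i) ≤ 1 :=
        PadicBernoulliAux.bernoulli_norm_le_one i (by omega)
      have hnC : padicNorm p ((p.choose i : ℕ) : ℚ) ≤ (p : ℚ)⁻¹ :=
        PadicBernoulliAux.norm_nat_le_inv (hp.dvd_choose_self (by omega) (by omega))
      have hnv : padicNorm p ((v : ℚ) ^ (p - i)) ≤ 1 := by
        rw [PadicBernoulliAux.norm_pow (p := p)]
        exact pow_le_one₀ (padicNorm.nonneg _) (padicNorm.of_nat v)
      have hnD : padicNorm p ((D : ℚ) ^ i) ≤ 1 := by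
        rw [PadicBernoulliAux.norm_pow (p := p)]
        exact pow_le_one₀ (padicNorm.nonneg _) (padicNorm.of_nat D)
      have : padicNorm p (f i) ≤ ((1 * (p : ℚ)⁻¹) * 1) * 1 := by
        apply PadicBernoulliAux.norm_mul_le (by positivity)
        · apply PadicBernoulliAux.norm_mul_le (by positivity)
          · exact PadicBernoulliAux.norm_mul_le (by norm_num) hnB hnC
          · exact hnv
        · exact hnD
      simpa using this
    · positivity
end

section
/- Let r ≥ 1 and let t ≥ 1 be an integer with 2^t ≥ r. Set α_j := 2^{j+t} − j + 1 for 1 ≤ j ≤ r. Then the determinant of the r × r matrix whose (i,m) entry, for 1 ≤ i ≤ r and 0 ≤ m ≤ r−1, is 2^{α_i+m}(B_{α_i+m}(1/2) − B_{α_i+m})/(α_i+m), is a nonzero rational number whose 2-adic valuation equals −∑_{j=1}^{r}(t+j) = −rt − r(r+1)/2. -/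
/-!
Since `B_n(1/2) = (2^{1-n} - 1) B_n`, the `(i, m)` entry is `G_N / N`, where `N = α_i + m` and
`G_N = 2 (1 - 2^N) B_N` is the Genocchi number. By von Staudt–Clausen `2 B_{2k}` is a 2-adic unit,
so `G_N` is a 2-adic unit for even `N ≥ 2` and a 2-adic integer for every `N`. On the diagonal
`N = 2^{i+1+t}`, so the entry has 2-adic absolute value `2^{i+1+t}`; off the diagonal
`N ≡ m - i (mod 2^t)` with `0 < |m - i| < 2^t`, so the entry has absolute value `< 2^t`. In the
Leibniz expansion the diagonal product therefore strictly dominates every other term, and the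
ultrametric inequality gives `|det|_2 = ∏ 2^{i+1+t}`.
-/

open Finset

theorem Finset.prod_lt_prod_of_nonneg {ι R : Type*} [CommSemiring R] [PartialOrder R]
    [IsStrictOrderedRing R] {s : Finset ι} {f g : ι → R}
    (hf : ∀ i ∈ s, 0 ≤ f i) (hg : ∀ i ∈ s, 0 < g i)
    (hfg : ∀ i ∈ s, f i ≤ g i) (hlt : ∃ i ∈ s, f i < g i) :
    ∏ i ∈ s, f i < ∏ i ∈ s, g i := by
  classical
  obtain ⟨j, hj, hlt⟩ := hlt
  rw [← mul_prod_erase s f hj, ← mul_prod_erase s g hj]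
  exact mul_lt_mul_of_lt_of_le_of_nonneg_of_pos hlt
    (prod_le_prod (fun i hi => hf i (mem_of_mem_erase hi)) fun i hi => hfg i (mem_of_mem_erase hi))
    (hf j hj) (prod_pos fun i hi => hg i (mem_of_mem_erase hi))

theorem norm_add_eq_left_of_norm_lt {E : Type*} [SeminormedAddGroup E] [IsUltrametricDist E]
    {x y : E} (h : ‖y‖ < ‖x‖) : ‖x + y‖ = ‖x‖ := by
  rw [IsUltrametricDist.norm_add_eq_max_of_norm_ne_norm h.ne', max_eq_left h.le]

theorem Matrix.norm_det_eq_prod_diag_of_norm_lt {K n : Type*} [NormedField K]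
    [IsUltrametricDist K] [Fintype n] [DecidableEq n] (A : Matrix n n K)
    (hA : ∀ i j, i ≠ j → ‖A i j‖ < ‖A i i‖) : ‖A.det‖ = ∏ i, ‖A i i‖ := by
  have hterm (σ : Equiv.Perm n) (hσ : σ ≠ 1) :
      ‖Equiv.Perm.sign σ • ∏ x, A (σ x) x‖ < ∏ i, ‖A i i‖ := by
    obtain ⟨j, hj⟩ : ∃ j, σ j ≠ j := by
      by_contra! h
      exact hσ (Equiv.ext h)
    have hpos (i : n) : 0 < ‖A i i‖ := by
      by_cases hij : i = j
      · subst hij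
        exact (norm_nonneg _).trans_lt (hA i (σ i) (Ne.symm hj))
      · exact (norm_nonneg _).trans_lt (hA i j hij)
    rw [norm_units_zsmul, norm_prod, ← Equiv.prod_comp σ fun i => ‖A i i‖]
    refine prod_lt_prod_of_nonneg (fun _ _ => norm_nonneg _) (fun _ _ => hpos _)
      (fun x _ => ?_) ⟨j, mem_univ _, hA _ _ hj⟩
    by_cases hx : σ x = x
    · rw [hx]
    · exact (hA _ _ hx).le
  have hone : ‖Equiv.Perm.sign (1 : Equiv.Perm n) • ∏ x, A ((1 : Equiv.Perm n) x) x‖ =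
      ∏ i, ‖A i i‖ := by
    rw [norm_units_zsmul, norm_prod]
    rfl
  rw [Matrix.det_apply, ← add_sum_erase _ _ (mem_univ 1)]
  rcases (univ.erase (1 : Equiv.Perm n)).eq_empty_or_nonempty with hempty | hne
  · rw [hempty, sum_empty, add_zero, hone]
  · obtain ⟨σ, hσ, hle⟩ := IsUltrametricDist.exists_norm_finsetSum_le_of_nonempty hne
      fun σ : Equiv.Perm n => Equiv.Perm.sign σ • ∏ x, A (σ x) x
    have hlt := hle.trans_lt (hterm σ (ne_of_mem_erase hσ))
    rw [norm_add_eq_left_of_norm_lt (by rwa [hone]), hone]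

theorem Padic.norm_two : ‖(2 : ℚ_[2])‖ = 2⁻¹ := by
  simpa using Padic.norm_p (p := 2)

theorem Padic.norm_one_sub_two_pow {n : ℕ} (hn : n ≠ 0) : ‖(1 - 2 ^ n : ℚ_[2])‖ = 1 := by
  rw [sub_eq_add_neg, norm_add_eq_left_of_norm_lt] <;>
    simp only [norm_one, norm_neg, norm_pow, Padic.norm_two, inv_pow]
  exact inv_lt_one_of_one_lt₀ (one_lt_pow₀ one_lt_two hn)

theorem Padic.ne_zero_and_padicValRat_eq_of_norm_eq {p : ℕ} [Fact p.Prime] {q : ℚ} {v : ℤ}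
    (h : ‖(q : ℚ_[p])‖ = (p : ℝ) ^ v) : q ≠ 0 ∧ padicValRat p q = -v := by
  have hp : (1 : ℝ) < p := by exact_mod_cast (Fact.out : p.Prime).one_lt
  have hq : q ≠ 0 := by
    rintro rfl
    rw [Rat.cast_zero, norm_zero] at h
    exact (zpow_pos (by linarith) v).ne h
  refine ⟨hq, ?_⟩
  rw [Padic.norm_eq_zpow_neg_valuation (by exact_mod_cast hq), Padic.valuation_ratCast] at h
  have := zpow_right_injective₀ (by linarith) hp.ne' h
  omega

noncomputable def genocchi (n : ℕ) : ℚ := 2 * (1 - 2 ^ n) * bernoulli n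

theorem two_pow_mul_bernoulli_eval_half_sub_bernoulli (n : ℕ) :
    (2 : ℚ) ^ n * ((Polynomial.bernoulli n).eval (1 / 2) - bernoulli n) = genocchi n := by
  have half : (Polynomial.bernoulli n).eval (1 / 2 : ℚ) = (2 / (2 : ℚ) ^ n - 1) * bernoulli n := by
    have h := bernoulliFun_eval_half n
    rw [bernoulliFun, Polynomial.eval_map, show (2⁻¹ : ℝ) = algebraMap ℚ ℝ (1 / 2) by norm_num,
      Polynomial.eval₂_at_apply, eq_ratCast] at h
    apply Rat.cast_injective (α := ℝ)
    rw [h]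
    push_cast
    rfl
  rw [half, genocchi]
  field_simp
  ring

theorem norm_two_mul_bernoulli_two_mul {k : ℕ} (hk : 0 < k) :
    ‖2 * (bernoulli (2 * k) : ℚ_[2])‖ = 1 := by
  obtain ⟨z, hz⟩ := Bernoulli.vonStaudt_clausen k
  have h2 : 2 ∈ (range (2 * k + 2)).filter fun p => p.Prime ∧ (p - 1) ∣ 2 * k := by
    simp only [mem_filter, mem_range]
    exact ⟨by omega, Nat.prime_two, one_dvd _⟩
  rw [← add_sum_erase _ _ h2] at hz
  set S := ∑ p ∈ ((range (2 * k + 2)).filter fun p => p.Prime ∧ (p - 1) ∣ 2 * k).erase 2,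
    (1 : ℚ) / p
  have hS : ‖(S : ℚ_[2])‖ ≤ 1 := by
    push_cast [S]
    refine IsUltrametricDist.norm_sum_le_of_forall_le_of_nonneg zero_le_one fun p hp => ?_
    simp only [mem_erase, mem_filter] at hp
    have hunit : ‖(p : ℚ_[2])‖ = 1 := Padic.norm_natCast_eq_one_iff.mpr
      ((Nat.coprime_primes Nat.prime_two hp.2.2.1).mpr hp.1.symm)
    rw [norm_div, norm_one, hunit, div_one]
  have hzS : ‖(z - S : ℚ_[2])‖ ≤ 1 := by
    rw [sub_eq_add_neg]
    exact (IsUltrametricDist.norm_add_le_max _ _).trans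
      (max_le (Padic.norm_int_le_one z) (by rwa [norm_neg]))
  have hsmall : ‖2 * (bernoulli (2 * k) : ℚ_[2]) + 1‖ < 1 := by
    have hcast := congrArg (fun x : ℚ => (x : ℚ_[2])) hz
    push_cast at hcast
    rw [show 2 * (bernoulli (2 * k) : ℚ_[2]) + 1 = 2 * (z - S) by rw [hcast]; ring, norm_mul,
      Padic.norm_two]
    linarith
  calc ‖2 * (bernoulli (2 * k) : ℚ_[2])‖ = ‖-1 + (2 * (bernoulli (2 * k) : ℚ_[2]) + 1)‖ := by
        ring_nf
    _ = 1 := by rw [norm_add_eq_left_of_norm_lt (by rwa [norm_neg, norm_one]), norm_neg, norm_one]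

theorem norm_genocchi_two_mul {k : ℕ} (hk : k ≠ 0) : ‖(genocchi (2 * k) : ℚ_[2])‖ = 1 := by
  rw [genocchi, mul_comm 2 (1 - _), mul_assoc]
  push_cast
  rw [norm_mul, Padic.norm_one_sub_two_pow (by omega),
    norm_two_mul_bernoulli_two_mul (Nat.pos_of_ne_zero hk), one_mul]

theorem norm_genocchi_le_one (n : ℕ) : ‖(genocchi n : ℚ_[2])‖ ≤ 1 := by
  obtain ⟨k, rfl | rfl⟩ := Nat.even_or_odd' n
  · rcases eq_or_ne k 0 with rfl | hk
    · simp [genocchi]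
    · exact (norm_genocchi_two_mul hk).le
  · rcases eq_or_ne k 0 with rfl | hk
    · norm_num [genocchi]
    · rw [genocchi, bernoulli_eq_zero_of_odd (odd_two_mul_add_one k) (by omega)]
      simp

theorem norm_genocchi_two_pow_div {k : ℕ} (hk : k ≠ 0) :
    ‖((genocchi (2 ^ k) / (2 ^ k : ℕ) : ℚ) : ℚ_[2])‖ = 2 ^ k := by
  have hG : ‖(genocchi (2 ^ k) : ℚ_[2])‖ = 1 := by
    obtain ⟨j, rfl⟩ := Nat.exists_eq_succ_of_ne_zero hk
    rw [pow_succ']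
    exact norm_genocchi_two_mul (pow_ne_zero _ two_ne_zero)
  rw [Rat.cast_div, norm_div, hG, Rat.cast_natCast, Nat.cast_pow, Nat.cast_ofNat, norm_pow,
    Padic.norm_two, inv_pow, one_div, inv_inv]

theorem norm_genocchi_div_lt {N t : ℕ} (hN : ¬ (2 : ℤ) ^ t ∣ N) :
    ‖((genocchi N / N : ℚ) : ℚ_[2])‖ < 2 ^ t := by
  have hlt : (2 : ℝ) ^ (-(t : ℤ)) < ‖(N : ℚ_[2])‖ := by
    have := not_le.mp ((Padic.norm_int_le_pow_iff_dvd (p := 2) N t).not.mpr (by exact_mod_cast hN))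
    exact_mod_cast this
  have hpos : (0 : ℝ) < 2 ^ (-(t : ℤ)) := zpow_pos two_pos _
  rw [Rat.cast_div, Rat.cast_natCast, norm_div]
  calc ‖(genocchi N : ℚ_[2])‖ / ‖(N : ℚ_[2])‖ ≤ 1 / ‖(N : ℚ_[2])‖ :=
        div_le_div_of_nonneg_right (norm_genocchi_le_one N) (hpos.trans hlt).le
    _ < 1 / 2 ^ (-(t : ℤ)) := one_div_lt_one_div_of_lt hpos hlt
    _ = 2 ^ t := by rw [zpow_neg, zpow_natCast, one_div, inv_inv]

theorem succ_le_two_pow_succ_add (i t : ℕ) : i + 1 ≤ 2 ^ (i + 1 + t) :=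
  Nat.lt_two_pow_self.le.trans (Nat.pow_le_pow_right two_pos (by omega))

theorem two_pow_succ_add_sub_succ_add_one_add_self (i t : ℕ) :
    2 ^ (i + 1 + t) - (i + 1) + 1 + i = 2 ^ (i + 1 + t) := by
  have := succ_le_two_pow_succ_add i t
  omega

theorem not_two_pow_dvd_two_pow_succ_add_sub_succ_add_one_add {i m t : ℕ} (him : i ≠ m)
    (hi : i < 2 ^ t) (hm : m < 2 ^ t) :
    ¬ (2 : ℤ) ^ t ∣ ((2 ^ (i + 1 + t) - (i + 1) + 1 + m : ℕ) : ℤ) := by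
  have hcast : ((2 ^ (i + 1 + t) - (i + 1) + 1 + m : ℕ) : ℤ) = 2 ^ t * 2 ^ (i + 1) + (m - i) := by
    push_cast [Nat.cast_sub (succ_le_two_pow_succ_add i t)]
    ring
  have hi' : (i : ℤ) < 2 ^ t := by exact_mod_cast hi
  have hm' : (m : ℤ) < 2 ^ t := by exact_mod_cast hm
  rw [hcast, dvd_add_right (dvd_mul_right _ _)]
  intro h
  have := Int.eq_zero_of_abs_lt_dvd h (abs_lt.mpr ⟨by omega, by omega⟩)
  omega

theorem sum_fin_val_add_one_add (r t : ℕ) :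
    ((∑ i : Fin r, (i.val + 1 + t) : ℕ) : ℤ) = r * t + r * (r + 1) / 2 := by
  have h : 2 * ∑ i ∈ range r, (i + 1 + t) = r * (r + 1) + 2 * (r * t) := by
    induction r with
    | zero => simp
    | succ r ih => rw [sum_range_succ, mul_add, ih]; ring
  rw [Fin.sum_univ_eq_sum_range (fun i => i + 1 + t)]
  have h' : (2 : ℤ) * ((∑ i ∈ range r, (i + 1 + t) : ℕ) : ℤ) = r * (r + 1) + 2 * (r * t) := by
    exact_mod_cast h
  omega

theorem det_two_adic_valuation_general (r t : ℕ) (h2t : r ≤ 2 ^ t) :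
    Matrix.det (Matrix.of fun i m : Fin r =>
      (2 : ℚ) ^ (2 ^ (i.val + 1 + t) - (i.val + 1) + 1 + m.val) *
        ((Polynomial.bernoulli (2 ^ (i.val + 1 + t) - (i.val + 1) + 1 + m.val)).eval
            (1 / 2 : ℚ) -
          bernoulli (2 ^ (i.val + 1 + t) - (i.val + 1) + 1 + m.val)) /
        ((2 ^ (i.val + 1 + t) - (i.val + 1) + 1 + m.val : ℕ) : ℚ)) ≠ 0 ∧
    padicValRat 2
      (Matrix.det (Matrix.of fun i m : Fin r =>
        (2 : ℚ) ^ (2 ^ (i.val + 1 + t) - (i.val + 1) + 1 + m.val) *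
          ((Polynomial.bernoulli (2 ^ (i.val + 1 + t) - (i.val + 1) + 1 + m.val)).eval
              (1 / 2 : ℚ) -
            bernoulli (2 ^ (i.val + 1 + t) - (i.val + 1) + 1 + m.val)) /
          ((2 ^ (i.val + 1 + t) - (i.val + 1) + 1 + m.val : ℕ) : ℚ))) =
      -((r : ℤ) * t + (r : ℤ) * (r + 1) / 2) := by
  simp only [two_pow_mul_bernoulli_eval_half_sub_bernoulli]
  set A : Matrix (Fin r) (Fin r) ℚ := Matrix.of fun i m =>
    genocchi (2 ^ (i.val + 1 + t) - (i.val + 1) + 1 + m.val) /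
      ((2 ^ (i.val + 1 + t) - (i.val + 1) + 1 + m.val : ℕ) : ℚ)
  have hdiag (i : Fin r) : ‖(A i i : ℚ_[2])‖ = 2 ^ (i.val + 1 + t) := by
    simp only [A, Matrix.of_apply]
    rw [two_pow_succ_add_sub_succ_add_one_add_self]
    exact norm_genocchi_two_pow_div (by omega)
  have hoff (i m : Fin r) (him : i ≠ m) : ‖(A i m : ℚ_[2])‖ < ‖(A i i : ℚ_[2])‖ := by
    rw [hdiag]
    refine (norm_genocchi_div_lt (not_two_pow_dvd_two_pow_succ_add_sub_succ_add_one_add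
      (Fin.val_ne_of_ne him) (by omega) (by omega))).trans_le ?_
    exact pow_le_pow_right₀ one_le_two (by omega)
  have hnorm : ‖(A.det : ℚ_[2])‖ = (2 : ℕ) ^ ((∑ i : Fin r, (i.val + 1 + t) : ℕ) : ℤ) := by
    rw [← Rat.coe_castHom, RingHom.map_det, RingHom.mapMatrix_apply,
      Matrix.norm_det_eq_prod_diag_of_norm_lt _ fun i m him => by simpa using hoff i m him]
    simp only [Matrix.map_apply, Rat.coe_castHom, hdiag, prod_pow_eq_pow_sum, zpow_natCast,
      Nat.cast_ofNat]
  obtain ⟨hne, hval⟩ := Padic.ne_zero_and_padicValRat_eq_of_norm_eq hnorm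
  exact ⟨hne, by rw [hval, sum_fin_val_add_one_add]⟩

/-- Let `r ≥ 1` and `t ≥ 1` with `2^t ≥ r`. Set `α_i := 2^{(i+1)+t} − (i+1) + 1` for
`0 ≤ i ≤ r−1`. Then the determinant of the `r × r` matrix with `(i,m)` entry
`2^{α_i+m}(B_{α_i+m}(1/2) − B_{α_i+m})/(α_i+m)` is a nonzero rational number whose
2-adic valuation equals `−rt − r(r+1)/2`. -/
theorem det_two_adic_valuation (r t : ℕ) (hr : 1 ≤ r) (ht : 1 ≤ t) (h2t : r ≤ 2 ^ t) :
    Matrix.det (Matrix.of fun i m : Fin r =>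
      (2 : ℚ) ^ (2 ^ (i.val + 1 + t) - (i.val + 1) + 1 + m.val) *
        ((Polynomial.bernoulli (2 ^ (i.val + 1 + t) - (i.val + 1) + 1 + m.val)).eval
            (1 / 2 : ℚ) -
          bernoulli (2 ^ (i.val + 1 + t) - (i.val + 1) + 1 + m.val)) /
        ((2 ^ (i.val + 1 + t) - (i.val + 1) + 1 + m.val : ℕ) : ℚ)) ≠ 0 ∧
    padicValRat 2
      (Matrix.det (Matrix.of fun i m : Fin r =>
        (2 : ℚ) ^ (2 ^ (i.val + 1 + t) - (i.val + 1) + 1 + m.val) *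
          ((Polynomial.bernoulli (2 ^ (i.val + 1 + t) - (i.val + 1) + 1 + m.val)).eval
              (1 / 2 : ℚ) -
            bernoulli (2 ^ (i.val + 1 + t) - (i.val + 1) + 1 + m.val)) /
          ((2 ^ (i.val + 1 + t) - (i.val + 1) + 1 + m.val : ℕ) : ℚ))) =
      -((r : ℤ) * t + (r : ℤ) * (r + 1) / 2) :=
  det_two_adic_valuation_general r t h2t
end

section
/- Let r ≥ 1 and let D ≥ 3 be an odd integer; set k := (D−1)/2 and N := rk. Let 2 ≤ α_1 < ⋯ < α_{2N} be integers such that α_t is odd for 1 ≤ t ≤ N and α_t is even for N+1 ≤ t ≤ 2N. Let Δ' be the determinant of the N × N matrix with rows t ∈ {1,…,N} and columns indexed by pairs (m,v), 0 ≤ m ≤ r−1, 1 ≤ v ≤ k, with entry D^{α_t+m}(B_{α_t+m}(v/D) − B_{α_t+m})/(α_t+m), and let Δ'' be the determinant of the N × N matrix defined in the same way but with rows t ∈ {N+1,…,2N}. Then there exists a nonzero rational number C such that Δ̃_{r,D}(α_1,…,α_{2N}) = C · Δ' · Δ''. In particular, if Δ' ≠ 0 and Δ'' ≠ 0 then Δ̃_{r,D}(α)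 ≠ 0. -/
/-!
For `n ≠ 1` the reflection `B_n(1 - x) = (-1)^n B_n(x)` together with `B_n(1) = B_n(0)` gives
`E(n, D - v) = (-1)^n E(n, v)` for the entries `E(n, v) = D^n (B_n(v/D) - B_n) / n`.
Hence, writing `ε_m = (-1)^(m+1)`, the column `(m, D - v)` of `Δ̃` equals `ε_m` times the column
`(m, v)` on the rows with `α_t` odd and `-ε_m` times it on the rows with `α_t` even. After
permuting rows and columns the matrix becomes `[[A, A E], [B, -B E]]` with `E = diag ε`, which
factors as `diag(A, B) · [[1, E], [1, -E]]`; its determinant is `(-2)^N (∏ ε) det A det B`.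
-/

/-- `Δ̃_{r,D}(α)` : the determinant of the `r(D−1) × r(D−1)` matrix whose rows are indexed by
`i ∈ {0,…,r(D−1)−1}` and whose columns `j` encode the pair `(m,v)` with `m = j / (D−1)` and
`v = j % (D−1) + 1 ∈ {1,…,D−1}`, with entry
`D^(α_i+m) * (B_{α_i+m}(v/D) − B_{α_i+m}) / (α_i+m)`. -/
noncomputable def DeltaTilde (r D : ℕ) (α : ℕ → ℕ) : ℚ :=
  Matrix.det (Matrix.of fun i j : Fin (r * (D - 1)) =>
    (D : ℚ) ^ (α i.val + j.val / (D - 1)) *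
      ((Polynomial.bernoulli (α i.val + j.val / (D - 1))).eval
          (((j.val % (D - 1) : ℕ) + 1 : ℚ) / (D : ℚ)) -
        bernoulli (α i.val + j.val / (D - 1))) /
      ((α i.val + j.val / (D - 1) : ℕ) : ℚ))

/-- The `N × N` matrix (`N = r·k`, `k = (D−1)/2`) with rows indexed by
`i ∈ {0,…,N−1}` (the row `i` using `α_{s+i}` for an offset `s`) and columns `j` encoding
`(m,v)` with `m = j / k ∈ {0,…,r−1}`, `v = j % k + 1 ∈ {1,…,k}`, with entry
`D^(α_{s+i}+m) * (B_{α_{s+i}+m}(v/D) − B_{α_{s+i}+m}) / (α_{s+i}+m)`. -/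
noncomputable def DeltaHalf (r D : ℕ) (α : ℕ → ℕ) (s : ℕ) : ℚ :=
  Matrix.det (Matrix.of fun i j : Fin (r * ((D - 1) / 2)) =>
    (D : ℚ) ^ (α (s + i.val) + j.val / ((D - 1) / 2)) *
      ((Polynomial.bernoulli (α (s + i.val) + j.val / ((D - 1) / 2))).eval
          (((j.val % ((D - 1) / 2) : ℕ) + 1 : ℚ) / (D : ℚ)) -
        bernoulli (α (s + i.val) + j.val / ((D - 1) / 2))) /
      ((α (s + i.val) + j.val / ((D - 1) / 2) : ℕ) : ℚ))

theorem Polynomial.bernoulli_eval_one_sub_sub_bernoulli {n : ℕ} (hn : n ≠ 1) (x : ℚ) :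
    (bernoulli n).eval (1 - x) - _root_.bernoulli n =
      (-1) ^ n * ((bernoulli n).eval x - _root_.bernoulli n) := by
  have h : (-1) ^ n * _root_.bernoulli n = _root_.bernoulli n := by
    simpa [bernoulli_eval_zero, bernoulli_eval_one, bernoulli_eq_bernoulli'_of_ne_one hn]
      using (bernoulli_eval_one_sub n 0).symm
  rw [bernoulli_eval_one_sub]
  linear_combination h

theorem Matrix.det_fromBlocks_mul_diagonal {R n : Type*} [CommRing R] [Fintype n]
    [DecidableEq n] (A B : Matrix n n R) (e : n → R) :
    (fromBlocks A (A * diagonal e) B (-(B * diagonal e))).det =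
      (-2) ^ Fintype.card n * (∏ i, e i) * A.det * B.det := by
  have hfactor : fromBlocks A (A * diagonal e) B (-(B * diagonal e)) =
      fromBlocks A 0 0 B * fromBlocks 1 (diagonal e) 1 (-diagonal e) := by
    rw [fromBlocks_multiply]
    simp only [Matrix.mul_one, Matrix.zero_mul, Matrix.mul_neg, neg_zero, add_zero, zero_add]
  have hdiag : -diagonal e - 1 * diagonal e = diagonal fun i => -2 * e i := by
    ext i j
    by_cases h : i = j <;> simp [h]
    ring
  rw [hfactor, det_mul, det_fromBlocks_zero₂₁, det_fromBlocks_one₁₁, hdiag, det_diagonal,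
    Finset.prod_mul_distrib, Finset.prod_const, Finset.card_univ]
  ring

theorem Matrix.det_eq_sign_mul_det_reindex {R m n : Type*} [CommRing R] [Fintype m]
    [DecidableEq m] [Fintype n] [DecidableEq n] (e e' : m ≃ n) (M : Matrix m m R) :
    M.det = Equiv.Perm.sign (e'.trans e.symm) * (M.reindex e e').det := by
  rw [det_reindex, ← mul_assoc, ← Int.cast_mul, ← Units.val_mul, Int.units_mul_self,
    Units.val_one, Int.cast_one, one_mul]

@[simp]
theorem Fin.divNat_finProdFinEquiv {m n : ℕ} (p : Fin m × Fin n) :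
    (finProdFinEquiv p).divNat = p.1 :=
  congrArg Prod.fst (finProdFinEquiv.symm_apply_apply p)

@[simp]
theorem Fin.modNat_finProdFinEquiv {m n : ℕ} (p : Fin m × Fin n) :
    (finProdFinEquiv p).modNat = p.2 :=
  congrArg Prod.snd (finProdFinEquiv.symm_apply_apply p)

noncomputable def bernoulliEntry (D n v : ℕ) : ℚ :=
  (D : ℚ) ^ n * ((Polynomial.bernoulli n).eval ((v : ℚ) / D) - bernoulli n) / n

theorem bernoulliEntry_self_sub {D n v : ℕ} (hD : D ≠ 0) (hn : n ≠ 1) (hv : v ≤ D) :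
    bernoulliEntry D n (D - v) = (-1) ^ n * bernoulliEntry D n v := by
  unfold bernoulliEntry
  rw [Nat.cast_sub hv, sub_div, div_self (Nat.cast_ne_zero.mpr hD),
    Polynomial.bernoulli_eval_one_sub_sub_bernoulli hn]
  ring

noncomputable def deltaMatrix (D : ℕ) (α : ℕ → ℕ) (s r w : ℕ) :
    Matrix (Fin (r * w)) (Fin (r * w)) ℚ :=
  Matrix.of fun i j => bernoulliEntry D (α (s + i) + j.divNat) (j.modNat + 1)

@[simp]
theorem deltaMatrix_apply_finProdFinEquiv (D : ℕ) (α : ℕ → ℕ) (s : ℕ) {r w : ℕ}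
    (i : Fin (r * w)) (p : Fin r × Fin w) :
    deltaMatrix D α s r w i (finProdFinEquiv p) =
      bernoulliEntry D (α (s + i) + p.1) (p.2 + 1) := by
  simp only [deltaMatrix, Matrix.of_apply, Fin.divNat_finProdFinEquiv, Fin.modNat_finProdFinEquiv]

theorem deltaTilde_eq_det (r D : ℕ) (α : ℕ → ℕ) :
    DeltaTilde r D α = (deltaMatrix D α 0 r (D - 1)).det := by
  unfold DeltaTilde
  congr 1
  ext i j
  simp [deltaMatrix, bernoulliEntry]

theorem deltaHalf_eq_det (r D : ℕ) (α : ℕ → ℕ) (s : ℕ) :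
    DeltaHalf r D α s = (deltaMatrix D α s r ((D - 1) / 2)).det := by
  unfold DeltaHalf
  congr 1
  ext i j
  simp [deltaMatrix, bernoulliEntry]

section

variable {D k r : ℕ}

def reflectSplit (hk : k + k = D - 1) : Fin k ⊕ Fin k ≃ Fin (D - 1) :=
  ((Equiv.refl _).sumCongr Fin.revPerm).trans (finSumFinEquiv.trans (finCongr hk))

/-- Sends the column `(m, v)` to `inl (m, v)` if `v ≤ k` and to `inr (m, D - v)` otherwise. -/
def columnSplit (hk : k + k = D - 1) : Fin (r * (D - 1)) ≃ Fin (r * k) ⊕ Fin (r * k) :=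
  finProdFinEquiv.symm.trans <| ((Equiv.refl _).prodCongr (reflectSplit hk).symm).trans <|
    (Equiv.prodSumDistrib _ _ _).trans <| finProdFinEquiv.sumCongr finProdFinEquiv

def rowSplit (hk : k + k = D - 1) : Fin (r * (D - 1)) ≃ Fin (r * k) ⊕ Fin (r * k) :=
  (finCongr (by rw [← hk, mul_add])).trans finSumFinEquiv.symm

theorem rowSplit_symm_inl (hk : k + k = D - 1) (a : Fin (r * k)) :
    ((rowSplit hk).symm (.inl a) : ℕ) = a := by
  simp [rowSplit]

theorem rowSplit_symm_inr (hk : k + k = D - 1) (a : Fin (r * k)) :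
    ((rowSplit hk).symm (.inr a) : ℕ) = r * k + a := by
  simp [rowSplit, add_comm]

theorem deltaMatrix_columnSplit_inl (hk : k + k = D - 1) (α : ℕ → ℕ) (s : ℕ)
    (i : Fin (r * (D - 1))) (c : Fin (r * k)) :
    deltaMatrix D α s r (D - 1) i ((columnSplit hk).symm (.inl c)) =
      bernoulliEntry D (α (s + i) + c.divNat) (c.modNat + 1) := by
  simp [columnSplit, reflectSplit]

theorem deltaMatrix_columnSplit_inr (hk : k + k = D - 1) (α : ℕ → ℕ) (s : ℕ)
    (i : Fin (r * (D - 1))) (c : Fin (r * k)) (hn : α (s + i) + c.divNat ≠ 1) :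
    deltaMatrix D α s r (D - 1) i ((columnSplit hk).symm (.inr c)) =
      (-1) ^ (α (s + i) + c.divNat) * bernoulliEntry D (α (s + i) + c.divNat) (c.modNat + 1) := by
  have hu : (c : ℕ) % k < k := c.modNat.isLt
  simp [columnSplit, reflectSplit]
  rw [show k - (c % k + 1) + k + 1 = D - (c % k + 1) by omega]
  exact bernoulliEntry_self_sub (by omega) hn (by omega)

theorem reindex_deltaMatrix {α : ℕ → ℕ} (hk : k + k = D - 1)
    (hα2 : ∀ i < r * (D - 1), 2 ≤ α i) (hodd : ∀ i < r * k, Odd (α i))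
    (heven : ∀ i, r * k ≤ i → i < 2 * (r * k) → Even (α i)) :
    (deltaMatrix D α 0 r (D - 1)).reindex (rowSplit hk) (columnSplit hk) =
      Matrix.fromBlocks (deltaMatrix D α 0 r k)
        (deltaMatrix D α 0 r k * Matrix.diagonal fun c => (-1) ^ ((c.divNat : ℕ) + 1))
        (deltaMatrix D α (r * k) r k)
        (-(deltaMatrix D α (r * k) r k *
          Matrix.diagonal fun c => (-1) ^ ((c.divNat : ℕ) + 1))) := by
  have hN : r * (D - 1) = r * k + r * k := by rw [← hk, mul_add]
  ext (a | a) (c | c) <;>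
    simp only [Matrix.reindex_apply, Matrix.submatrix_apply, Matrix.fromBlocks_apply₁₁,
      Matrix.fromBlocks_apply₁₂, Matrix.fromBlocks_apply₂₁, Matrix.fromBlocks_apply₂₂,
      Matrix.mul_diagonal, Matrix.neg_apply]
  · rw [deltaMatrix_columnSplit_inl, rowSplit_symm_inl]
    rfl
  · have h2 : 2 ≤ α a := hα2 a (by omega)
    rw [deltaMatrix_columnSplit_inr hk α 0 _ c (by rw [rowSplit_symm_inl, zero_add]; omega),
      rowSplit_symm_inl, zero_add, pow_add, (hodd a a.isLt).neg_one_pow]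
    simp only [deltaMatrix, Matrix.of_apply, zero_add]
    ring
  · rw [deltaMatrix_columnSplit_inl, rowSplit_symm_inr, zero_add]
    rfl
  · have h2 : 2 ≤ α (r * k + a) := hα2 _ (by omega)
    rw [deltaMatrix_columnSplit_inr hk α 0 _ c (by rw [rowSplit_symm_inr, zero_add]; omega),
      rowSplit_symm_inr, zero_add, pow_add, (heven _ (by omega) (by omega)).neg_one_pow]
    simp only [deltaMatrix, Matrix.of_apply]
    ring

end

theorem deltaTilde_eq_product_general (r D : ℕ) (hDodd : Odd D)
    (α : ℕ → ℕ) (hα : StrictMonoOn α (Set.Iio (r * (D - 1)))) (hα2 : 2 ≤ α 0)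
    (hodd : ∀ i < r * ((D - 1) / 2), Odd (α i))
    (heven : ∀ i, r * ((D - 1) / 2) ≤ i → i < 2 * (r * ((D - 1) / 2)) → Even (α i)) :
    (∃ C : ℚ, C ≠ 0 ∧
      DeltaTilde r D α = C * DeltaHalf r D α 0 * DeltaHalf r D α (r * ((D - 1) / 2))) ∧
    (DeltaHalf r D α 0 ≠ 0 → DeltaHalf r D α (r * ((D - 1) / 2)) ≠ 0 →
      DeltaTilde r D α ≠ 0) := by
  have hk : (D - 1) / 2 + (D - 1) / 2 = D - 1 := by
    obtain ⟨c, rfl⟩ := hDodd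
    omega
  have hα2' : ∀ i < r * (D - 1), 2 ≤ α i := fun i hi =>
    hα2.trans (hα.monotoneOn (lt_of_le_of_lt (Nat.zero_le i) hi) hi (Nat.zero_le i))
  obtain ⟨C, hC, hfactor⟩ : ∃ C : ℚ, C ≠ 0 ∧
      DeltaTilde r D α = C * DeltaHalf r D α 0 * DeltaHalf r D α (r * ((D - 1) / 2)) := by
    refine ⟨Equiv.Perm.sign ((columnSplit (r := r) hk).trans (rowSplit hk).symm) *
      ((-2) ^ (r * ((D - 1) / 2)) * ∏ c : Fin (r * ((D - 1) / 2)), (-1) ^ ((c.divNat : ℕ) + 1)),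
      ?_, ?_⟩
    · exact mul_ne_zero (Int.cast_ne_zero.mpr (Units.ne_zero _)) <| mul_ne_zero
        (pow_ne_zero _ (by norm_num))
        (Finset.prod_ne_zero_iff.mpr fun _ _ => pow_ne_zero _ (by norm_num))
    · rw [deltaTilde_eq_det, deltaHalf_eq_det, deltaHalf_eq_det,
        Matrix.det_eq_sign_mul_det_reindex (rowSplit hk) (columnSplit hk),
        reindex_deltaMatrix hk hα2' hodd heven, Matrix.det_fromBlocks_mul_diagonal,
        Fintype.card_fin]
      ring
  exact ⟨⟨C, hC, hfactor⟩, fun h₁ h₂ => hfactor ▸ mul_ne_zero (mul_ne_zero hC h₁) h₂⟩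

/-- Let `r ≥ 1`, `D ≥ 3` odd, `k = (D−1)/2`, `N = r·k`. Let `2 ≤ α_0 < ⋯ < α_{2N−1}` be
integers, odd in the first half and even in the second. Then
`Δ̃_{r,D}(α) = C·Δ'·Δ''` for some nonzero rational `C`, where `Δ'` uses rows
`α_0,…,α_{N−1}` and `Δ''` uses rows `α_N,…,α_{2N−1}`. In particular, if `Δ' ≠ 0` and
`Δ'' ≠ 0` then `Δ̃_{r,D}(α) ≠ 0`. -/
theorem deltaTilde_eq_product (r D : ℕ) (hr : 1 ≤ r) (hD3 : 3 ≤ D) (hDodd : Odd D)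
    (α : ℕ → ℕ) (hα : StrictMonoOn α (Set.Iio (r * (D - 1)))) (hα2 : 2 ≤ α 0)
    (hodd : ∀ i < r * ((D - 1) / 2), Odd (α i))
    (heven : ∀ i, r * ((D - 1) / 2) ≤ i → i < 2 * (r * ((D - 1) / 2)) → Even (α i)) :
    (∃ C : ℚ, C ≠ 0 ∧
      DeltaTilde r D α = C * DeltaHalf r D α 0 * DeltaHalf r D α (r * ((D - 1) / 2))) ∧
    (DeltaHalf r D α 0 ≠ 0 → DeltaHalf r D α (r * ((D - 1) / 2)) ≠ 0 →
      DeltaTilde r D α ≠ 0) :=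
  deltaTilde_eq_product_general r D hDodd α hα hα2 hodd heven
end

section
/- Let p be an odd prime, k := (p−1)/2, and t ≥ 1 an integer. Then the determinant of the k × k matrix whose (j,v) entry, for 1 ≤ j,v ≤ k, is p^{2jp^t}(B_{2jp^t}(v/p) − B_{2jp^t}), is a nonzero rational number with p-adic valuation equal to 0. -/
/-!
Expanding the Bernoulli polynomial binomially,
`p^n (B_n(w/p) - B_n) = w^n + ∑_{0<i<n} C(n,i) w^(n-i) B_i p^i`, and every term of the sum is
divisible by `p`: for `i = 1` since `B_1 = -1/2` and `p` is odd, for even `i ≥ 2` since `p B_i`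
is `p`-integral by von Staudt–Clausen, and odd `i > 1` have `B_i = 0`. Together with Fermat's
little theorem, the matrix has `p`-integral entries and reduces mod `p` to `(v^(2j))`, whose
determinant is, up to the nonzero factor `∏ v²`, the Vandermonde determinant of the squares
`1², …, k²`; these are distinct mod `p`, so the determinant is a `p`-adic unit.
-/

open Finset

theorem IsUltrametricDist.norm_sum_lt_of_forall_lt {M ι : Type*} [SeminormedAddCommGroup M]
    [IsUltrametricDist M] {s : Finset ι} {f : ι → M} {C : ℝ} (hC : 0 < C)
    (h : ∀ i ∈ s, ‖f i‖ < C) : ‖∑ i ∈ s, f i‖ < C := by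
  classical
  induction s using Finset.induction_on with
  | empty => simpa using hC
  | insert a s ha ih =>
    rw [sum_insert ha]
    exact (norm_add_le_max _ _).trans_lt <|
      max_lt (h a (mem_insert_self a s)) (ih fun i hi => h i (mem_insert_of_mem hi))

theorem Polynomial.pow_mul_bernoulli_eval_div (n : ℕ) {a : ℚ} (ha : a ≠ 0) (x : ℚ) :
    a ^ n * (bernoulli n).eval (x / a) =
      ∑ i ∈ range (n + 1), (n.choose i : ℚ) * x ^ (n - i) * (_root_.bernoulli i * a ^ i) := by
  rw [bernoulli, eval_finsetSum, mul_sum]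
  refine sum_congr rfl fun i hi => ?_
  rw [eval_monomial, div_pow]
  nth_rw 1 [← Nat.sub_add_cancel (mem_range_succ_iff.mp hi)]
  rw [pow_add]
  field_simp

theorem Matrix.det_of_pow_succ_ne_zero {R : Type*} [CommRing R] [IsDomain R] {k : ℕ}
    {x : Fin k → R} (hx : Function.Injective x) (hx0 : ∀ i, x i ≠ 0) :
    (Matrix.of fun j v : Fin k => x v ^ (j.val + 1)).det ≠ 0 := by
  have hmat : (Matrix.of fun j v : Fin k => x v ^ (j.val + 1)) =
      Matrix.of fun j v => x v * (vandermonde x).transpose j v := by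
    ext j v
    simp [vandermonde, pow_succ']
  rw [hmat, det_mul_row, det_transpose]
  exact mul_ne_zero (prod_ne_zero_iff.mpr fun i _ => hx0 i) (det_vandermonde_ne_zero_iff.mpr hx)

namespace Padic

variable {p : ℕ} [Fact p.Prime]

theorem norm_natCast_le_one (n : ℕ) : ‖(n : ℚ_[p])‖ ≤ 1 :=
  mod_cast norm_int_le_one (p := p) n

theorem norm_natCast_mul_bernoulli_two_mul_le_one (k : ℕ) :
    ‖(p : ℚ_[p]) * bernoulli (2 * k)‖ ≤ 1 := by
  obtain ⟨z, hz⟩ := Bernoulli.vonStaudt_clausen k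
  set S := {q ∈ range (2 * k + 2) | q.Prime ∧ (q - 1) ∣ 2 * k}
  have hz' : bernoulli (2 * k) + ∑ q ∈ S, (q : ℚ)⁻¹ = z := by simpa [one_div] using hz.symm
  have hB : (bernoulli (2 * k) : ℚ_[p]) = z + ∑ q ∈ S, -(q : ℚ_[p])⁻¹ := by
    rw [sum_neg_distrib, ← sub_eq_add_neg, eq_sub_iff_add_eq]
    simpa using congrArg (Rat.cast : ℚ → ℚ_[p]) hz'
  rw [hB, mul_add, mul_sum]
  refine (IsUltrametricDist.norm_add_le_max _ _).trans (max_le ?_ ?_)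
  · rw [norm_mul]
    exact mul_le_one₀ (norm_natCast_le_one p) (norm_nonneg _) (norm_int_le_one z)
  · refine IsUltrametricDist.norm_sum_le_of_forall_le_of_nonneg zero_le_one fun q hq => ?_
    have hq : q.Prime := (mem_filter.mp hq).2.1
    rw [mul_neg, norm_neg]
    rcases eq_or_ne q p with rfl | hqp
    · simp [hq.ne_zero]
    · have hq1 : ‖(q : ℚ_[p])‖ = 1 :=
        norm_natCast_eq_one_iff.mpr ((Nat.coprime_primes Fact.out hq).mpr hqp.symm)
      rw [norm_mul, norm_inv, hq1, inv_one, mul_one]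
      exact norm_natCast_le_one p

theorem norm_bernoulli_mul_pow_lt_one (hp2 : p ≠ 2) {i : ℕ} (hi : i ≠ 0) :
    ‖(bernoulli i : ℚ_[p]) * (p : ℚ_[p]) ^ i‖ < 1 := by
  have hp1 : ‖(p : ℚ_[p])‖ < 1 := by
    rw [norm_p]; exact inv_lt_one_of_one_lt₀ (mod_cast (Fact.out : p.Prime).one_lt)
  obtain ⟨k, rfl | rfl⟩ := Nat.even_or_odd' i
  · have hsplit : (bernoulli (2 * k) : ℚ_[p]) * (p : ℚ_[p]) ^ (2 * k) =
        (p * bernoulli (2 * k)) * (p : ℚ_[p]) ^ (2 * k - 1) := by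
      rw [mul_comm (p : ℚ_[p]), mul_assoc, ← pow_succ', Nat.sub_add_cancel (by omega)]
    rw [hsplit, norm_mul, norm_pow]
    exact mul_lt_one_of_nonneg_of_lt_one_right (norm_natCast_mul_bernoulli_two_mul_le_one k)
      (by positivity) (pow_lt_one₀ (norm_nonneg _) hp1 (by omega))
  · rcases Nat.eq_zero_or_pos k with rfl | hk
    · have h2 : ‖(2 : ℚ_[p])‖ = 1 := by
        exact_mod_cast norm_natCast_eq_one_iff.mpr
          ((Nat.coprime_primes Fact.out Nat.prime_two).mpr hp2)
      simpa [bernoulli_one, norm_div, h2] using hp1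
    · simp [bernoulli_eq_zero_of_odd (odd_two_mul_add_one k) (by omega)]

theorem norm_pow_mul_bernoulli_sub_sub_pow_lt_one (hp2 : p ≠ 2) {n : ℕ} (hn : n ≠ 0)
    (w : ℕ) :
    ‖(((p : ℚ) ^ n * ((Polynomial.bernoulli n).eval ((w : ℚ) / p) - bernoulli n) : ℚ) :
        ℚ_[p]) - (w : ℚ_[p]) ^ n‖ < 1 := by
  obtain ⟨m, rfl⟩ := Nat.exists_eq_succ_of_ne_zero hn
  have hp0 : (p : ℚ) ≠ 0 := Nat.cast_ne_zero.mpr (Fact.out : p.Prime).ne_zero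
  have hexpand : (p : ℚ) ^ (m + 1) * ((Polynomial.bernoulli (m + 1)).eval ((w : ℚ) / p) -
      bernoulli (m + 1)) = (w : ℚ) ^ (m + 1) +
        ∑ i ∈ range m, (((m + 1).choose (i + 1) * w ^ (m - i) : ℕ) : ℚ) *
          (bernoulli (i + 1) * (p : ℚ) ^ (i + 1)) := by
    rw [mul_sub, Polynomial.pow_mul_bernoulli_eval_div _ hp0, sum_range_succ, sum_range_succ']
    simp only [Nat.reduceSubDiff, Nat.choose_zero_right, Nat.cast_one, tsub_zero, one_mul,
      bernoulli_zero, pow_zero, mul_one, Nat.choose_self, tsub_self, Nat.cast_mul, Nat.cast_pow]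
    ring
  rw [hexpand]
  push_cast
  rw [add_sub_cancel_left]
  refine IsUltrametricDist.norm_sum_lt_of_forall_lt one_pos fun i _ => ?_
  rw [norm_mul]
  exact mul_lt_one_of_nonneg_of_lt_one_right (mod_cast norm_natCast_le_one _) (norm_nonneg _)
    (norm_bernoulli_mul_pow_lt_one hp2 i.succ_ne_zero)

theorem norm_natCast_pow_mul_pow_sub_pow_lt_one (w m t : ℕ) :
    ‖(w : ℚ_[p]) ^ (m * p ^ t) - (w : ℚ_[p]) ^ m‖ < 1 := by
  have h : ((w ^ (m * p ^ t) - w ^ m : ℤ) : ZMod p) = 0 := by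
    push_cast
    rw [pow_mul, ZMod.pow_card_pow, sub_self]
  exact_mod_cast norm_intCast_lt_one_iff.mpr ((ZMod.intCast_zmod_eq_zero_iff_dvd _ p).mp h)

theorem norm_pow_mul_bernoulli_mul_pow_sub_sub_pow_lt_one (hp2 : p ≠ 2) {m : ℕ} (hm : m ≠ 0)
    (w t : ℕ) :
    ‖(((p : ℚ) ^ (m * p ^ t) * ((Polynomial.bernoulli (m * p ^ t)).eval ((w : ℚ) / p) -
        bernoulli (m * p ^ t)) : ℚ) : ℚ_[p]) - (w : ℚ_[p]) ^ m‖ < 1 := by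
  rw [← sub_add_sub_cancel _ ((w : ℚ_[p]) ^ (m * p ^ t))]
  exact (IsUltrametricDist.norm_add_le_max _ _).trans_lt <| max_lt
    (norm_pow_mul_bernoulli_sub_sub_pow_lt_one hp2
      (mul_ne_zero hm (pow_ne_zero t (Fact.out : p.Prime).ne_zero)) w)
    (norm_natCast_pow_mul_pow_sub_pow_lt_one w m t)

theorem norm_det_eq_one_of_norm_sub_lt_one {ι : Type*} [Fintype ι] [DecidableEq ι]
    {M : Matrix ι ι ℚ_[p]} (A : Matrix ι ι ℤ_[p]) (hMA : ∀ i j, ‖M i j - A i j‖ < 1)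
    (hA : (A.map PadicInt.toZMod).det ≠ 0) : ‖M.det‖ = 1 := by
  have hM : ∀ i j, ‖M i j‖ ≤ 1 := fun i j => by
    simpa using (IsUltrametricDist.norm_add_le_max (M i j - A i j) (A i j)).trans
      (max_le (hMA i j).le (A i j).norm_le_one)
  let N : Matrix ι ι ℤ_[p] := Matrix.of fun i j => ⟨M i j, hM i j⟩
  have hNA : N.map PadicInt.toZMod = A.map PadicInt.toZMod := by
    ext i j
    rw [Matrix.map_apply, Matrix.map_apply, ← sub_eq_zero, ← map_sub, ← RingHom.mem_ker,
      PadicInt.ker_toZMod, IsLocalRing.mem_maximalIdeal, PadicInt.mem_nonunits]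
    exact hMA i j
  have hdet : PadicInt.toZMod N.det ≠ 0 := by
    rwa [RingHom.map_det, RingHom.mapMatrix_apply, hNA]
  have hMN : M.det = (N.det : ℚ_[p]) := (RingHom.map_det PadicInt.Coe.ringHom N).symm
  rw [hMN, ← PadicInt.norm_def]
  refine le_antisymm N.det.norm_le_one (not_lt.mp fun h => hdet ?_)
  rwa [← RingHom.mem_ker, PadicInt.ker_toZMod, IsLocalRing.mem_maximalIdeal,
    PadicInt.mem_nonunits]

theorem padicValRat_eq_zero_of_norm_eq_one {q : ℚ} (h : ‖(q : ℚ_[p])‖ = 1) :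
    padicValRat p q = 0 := by
  have hq : (q : ℚ_[p]) ≠ 0 := fun h0 => by simp [h0] at h
  rw [norm_eq_zpow_neg_valuation hq, valuation_ratCast,
    zpow_eq_one_iff_right₀ (Nat.cast_nonneg p) (mod_cast (Fact.out : p.Prime).ne_one)] at h
  exact neg_eq_zero.mp h

end Padic

theorem ZMod.injective_sq_natCast_succ {p : ℕ} [Fact p.Prime] :
    Function.Injective fun v : Fin ((p - 1) / 2) => ((v.val + 1 : ℕ) : ZMod p) ^ 2 := by
  intro a b hab
  rcases sq_eq_sq_iff_eq_or_eq_neg.mp hab with h | h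
  · rw [ZMod.natCast_eq_natCast_iff', Nat.mod_eq_of_lt (by omega),
      Nat.mod_eq_of_lt (by omega)] at h
    exact Fin.ext (by omega)
  · rw [eq_neg_iff_add_eq_zero, ← Nat.cast_add, ZMod.natCast_eq_zero_iff] at h
    exact absurd (Nat.le_of_dvd (by omega) h) (by omega)

theorem det_even_bernoulli_padic_general (p t : ℕ) (hp : p.Prime) (hodd : Odd p) :
    Matrix.det (Matrix.of fun j v : Fin ((p - 1) / 2) =>
      (p : ℚ) ^ (2 * (j.val + 1) * p ^ t) *
        ((Polynomial.bernoulli (2 * (j.val + 1) * p ^ t)).eval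
            (((v.val + 1 : ℕ) : ℚ) / (p : ℚ)) -
          bernoulli (2 * (j.val + 1) * p ^ t))) ≠ 0 ∧
    padicValRat p
      (Matrix.det (Matrix.of fun j v : Fin ((p - 1) / 2) =>
        (p : ℚ) ^ (2 * (j.val + 1) * p ^ t) *
          ((Polynomial.bernoulli (2 * (j.val + 1) * p ^ t)).eval
              (((v.val + 1 : ℕ) : ℚ) / (p : ℚ)) -
            bernoulli (2 * (j.val + 1) * p ^ t)))) = 0 := by
  have := Fact.mk hp
  have hp2 : p ≠ 2 := by rintro rfl; exact absurd hodd (by decide)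
  set M : Matrix (Fin ((p - 1) / 2)) (Fin ((p - 1) / 2)) ℚ := Matrix.of fun j v =>
    (p : ℚ) ^ (2 * (j.val + 1) * p ^ t) *
      ((Polynomial.bernoulli (2 * (j.val + 1) * p ^ t)).eval
          (((v.val + 1 : ℕ) : ℚ) / (p : ℚ)) -
        bernoulli (2 * (j.val + 1) * p ^ t))
  have hnorm : ‖(M.det : ℚ_[p])‖ = 1 := by
    rw [← Rat.coe_castHom, RingHom.map_det]
    refine Padic.norm_det_eq_one_of_norm_sub_lt_one
      (Matrix.of fun j v => ((v.val + 1 : ℕ) : ℤ_[p]) ^ (2 * (j.val + 1))) (fun j v => ?_) ?_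
    · simp only [RingHom.mapMatrix_apply, Matrix.map_apply, Matrix.of_apply, Rat.coe_castHom,
        PadicInt.coe_pow, PadicInt.coe_natCast]
      exact Padic.norm_pow_mul_bernoulli_mul_pow_sub_sub_pow_lt_one hp2 (by omega) _ t
    · have hx0 (v : Fin ((p - 1) / 2)) : ((v.val + 1 : ℕ) : ZMod p) ^ 2 ≠ 0 :=
        pow_ne_zero 2 fun h =>
          absurd (Nat.le_of_dvd (by omega) ((ZMod.natCast_eq_zero_iff _ _).mp h)) (by omega)
      simpa [Matrix.map, pow_mul] using
        Matrix.det_of_pow_succ_ne_zero ZMod.injective_sq_natCast_succ hx0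
  exact ⟨fun h => by simp [h] at hnorm, Padic.padicValRat_eq_zero_of_norm_eq_one hnorm⟩

/-- Let `p` be an odd prime, `k = (p−1)/2`, `t ≥ 1`. The determinant of the `k × k` matrix
with (1-indexed) `(j,v)` entry `p^{2jp^t}(B_{2jp^t}(v/p) − B_{2jp^t})` is a nonzero rational
number with `p`-adic valuation `0`. -/
theorem det_even_bernoulli_padic (p t : ℕ) (hp : p.Prime) (hodd : Odd p) (ht : 1 ≤ t) :
    Matrix.det (Matrix.of fun j v : Fin ((p - 1) / 2) =>
      (p : ℚ) ^ (2 * (j.val + 1) * p ^ t) *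
        ((Polynomial.bernoulli (2 * (j.val + 1) * p ^ t)).eval
            (((v.val + 1 : ℕ) : ℚ) / (p : ℚ)) -
          bernoulli (2 * (j.val + 1) * p ^ t))) ≠ 0 ∧
    padicValRat p
      (Matrix.det (Matrix.of fun j v : Fin ((p - 1) / 2) =>
        (p : ℚ) ^ (2 * (j.val + 1) * p ^ t) *
          ((Polynomial.bernoulli (2 * (j.val + 1) * p ^ t)).eval
              (((v.val + 1 : ℕ) : ℚ) / (p : ℚ)) -
            bernoulli (2 * (j.val + 1) * p ^ t)))) = 0 :=
  det_even_bernoulli_padic_general p t hp hodd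
end

section
/- Let p be an odd prime, k := (p−1)/2, and t ≥ 1 an integer. Then the determinant of the k × k matrix whose (j,v) entry, for 1 ≤ j,v ≤ k, is p^{(2j−1)p^t}(B_{(2j−1)p^t}(v/p) − B_{(2j−1)p^t}), is a nonzero rational number with p-adic valuation equal to 0. -/
/-!
Write `n = (2j-1)p^t`. Expanding `B_n(x) = ∑ C(n,i) B_i x^(n-i)` gives
`p^n (B_n(v/p) - B_n) = ∑_{i<n} C(n,i) B_i v^(n-i) p^i`, whose `i = 0` term is `v^n`. By von
Staudt–Clausen `p B_i` is `p`-integral, and `B_1 = -1/2` is a `p`-adic unit for odd `p`, so every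
other term is divisible by `p`. Hence the matrix is `p`-integral and congruent mod `p` to
`(v^n) ≡ (v^(2j-1))` (Fermat), a Vandermonde matrix in the squares `1², …, k²` with columns scaled
by `v`. These squares are distinct mod `p`, so the determinant is a `p`-adic unit.
-/

open Finset

lemma pow_mul_bernoulli_eval_div_sub (n : ℕ) {q : ℚ} (hq : q ≠ 0) (a : ℚ) :
    q ^ n * ((Polynomial.bernoulli n).eval (a / q) - bernoulli n) =
      ∑ i ∈ range n, bernoulli i * n.choose i * a ^ (n - i) * q ^ i := by
  rw [Polynomial.bernoulli, Polynomial.eval_finsetSum, sum_range_succ]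
  simp only [Polynomial.eval_monomial, Nat.choose_self, Nat.sub_self, pow_zero, Nat.cast_one,
    mul_one, add_sub_cancel_right, mul_sum]
  refine sum_congr rfl fun i hi => ?_
  have hin : i ≤ n := (mem_range.mp hi).le
  rw [div_pow, ← Nat.sub_add_cancel hin, pow_add, Nat.add_sub_cancel]
  field_simp

section Padic

variable {p : ℕ} [hp : Fact p.Prime]

lemma Padic.norm_inv_natCast_le_of_prime {q : ℕ} (hq : q.Prime) : ‖(q : ℚ_[p])⁻¹‖ ≤ p := by
  rcases eq_or_ne q p with rfl | hqp
  · simp [Padic.norm_p]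
  · have : ‖(q : ℚ_[p])‖ = 1 :=
      Padic.norm_natCast_eq_one_iff.mpr ((Nat.coprime_primes hp.out hq).mpr hqp.symm)
    rw [norm_inv, this, inv_one]
    exact_mod_cast hp.out.one_le

lemma Padic.norm_bernoulli_le (n : ℕ) : ‖(bernoulli n : ℚ_[p])‖ ≤ p := by
  obtain ⟨k, rfl | rfl⟩ := n.even_or_odd'
  · obtain ⟨z, hz⟩ := Bernoulli.vonStaudt_clausen k
    rw [eq_sub_of_add_eq hz.symm]
    push_cast
    rw [sub_eq_add_neg]
    refine (IsUltrametricDist.norm_add_le_max _ _).trans (max_le ?_ ?_)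
    · exact (Padic.norm_int_le_one z).trans (by exact_mod_cast hp.out.one_le)
    · rw [norm_neg]
      refine IsUltrametricDist.norm_sum_le_of_forall_le_of_nonneg (by positivity) fun q hq => ?_
      rw [one_div]
      exact Padic.norm_inv_natCast_le_of_prime (mem_filter.mp hq).2.1
  · rcases k.eq_zero_or_pos with rfl | hk
    · simpa [bernoulli_one] using Padic.norm_inv_natCast_le_of_prime (p := p) Nat.prime_two
    · rw [bernoulli_eq_zero_of_odd (odd_two_mul_add_one k) (by omega)]
      simp

lemma Padic.norm_bernoulli_mul_pow_le (hp2 : p ≠ 2) {i : ℕ} (hi : 1 ≤ i) :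
    ‖(bernoulli i : ℚ_[p]) * p ^ i‖ ≤ (p : ℝ)⁻¹ := by
  rw [norm_mul, norm_pow, Padic.norm_p]
  rcases hi.eq_or_lt with rfl | hi
  · have h2 : ‖(2 : ℚ_[p])‖ = 1 := by
      exact_mod_cast Padic.norm_natCast_eq_one_iff.mpr
        ((Nat.coprime_primes hp.out Nat.prime_two).mpr hp2)
    simp [bernoulli_one, h2]
  · have hp0 : (0 : ℝ) < p := by exact_mod_cast hp.out.pos
    calc ‖(bernoulli i : ℚ_[p])‖ * (p : ℝ)⁻¹ ^ i ≤ p * (p : ℝ)⁻¹ ^ i := by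
          gcongr; exact Padic.norm_bernoulli_le i
      _ = (p : ℝ)⁻¹ ^ (i - 1) := by
          rw [← Nat.sub_add_cancel hi.le, pow_succ, Nat.add_sub_cancel]; field_simp
      _ ≤ (p : ℝ)⁻¹ := by
          refine pow_le_of_le_one (by positivity) (inv_le_one_of_one_le₀ ?_) (by omega)
          exact_mod_cast hp.out.one_le

lemma Padic.norm_pow_mul_bernoulli_eval_div_sub_sub_lt_one (hp2 : p ≠ 2) (c : ℕ) {n : ℕ}
    (hn : n ≠ 0) :
    ‖(((p : ℚ) ^ n * ((Polynomial.bernoulli n).eval ((c : ℚ) / p) - bernoulli n) : ℚ) : ℚ_[p]) -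
      (c : ℚ_[p]) ^ n‖ < 1 := by
  rw [pow_mul_bernoulli_eval_div_sub n (by exact_mod_cast hp.out.ne_zero), range_eq_Ico,
    sum_eq_sum_Ico_succ_bot (Nat.pos_of_ne_zero hn)]
  simp only [bernoulli_zero, Nat.choose_zero_right, Nat.sub_zero, pow_zero, Nat.cast_one, mul_one]
  push_cast
  rw [one_mul, add_sub_cancel_left]
  refine lt_of_le_of_lt ?_ (inv_lt_one_of_one_lt₀ (Nat.one_lt_cast.mpr hp.out.one_lt))
  refine IsUltrametricDist.norm_sum_le_of_forall_le_of_nonneg (by positivity) fun i hi => ?_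
  have hcoeff : ‖(n.choose i : ℚ_[p]) * (c : ℚ_[p]) ^ (n - i)‖ ≤ 1 := by
    exact_mod_cast Padic.norm_int_le_one (n.choose i * c ^ (n - i) : ℤ)
  calc _ = ‖(bernoulli i : ℚ_[p]) * p ^ i‖ * ‖(n.choose i : ℚ_[p]) * (c : ℚ_[p]) ^ (n - i)‖ := by
        rw [← norm_mul]; ring_nf
    _ ≤ (p : ℝ)⁻¹ * 1 := by
        gcongr
        exact Padic.norm_bernoulli_mul_pow_le hp2 (mem_Ico.mp hi).1
    _ = (p : ℝ)⁻¹ := mul_one _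

lemma PadicInt.toZMod_eq_of_norm_sub_lt_one {x y : ℤ_[p]} (h : ‖x - y‖ < 1) :
    toZMod x = toZMod y := by
  rw [← sub_eq_zero, ← map_sub, ← RingHom.mem_ker, ker_toZMod,
    IsLocalRing.mem_maximalIdeal, mem_nonunits_iff, not_isUnit_iff]
  exact h

lemma PadicInt.norm_det_eq_one {ι : Type*} [Fintype ι] [DecidableEq ι] (A : Matrix ι ι ℤ_[p])
    (hA : (A.map toZMod).det ≠ 0) : ‖A.det‖ = 1 := by
  rw [← isUnit_iff]
  by_contra hu
  rw [← mem_nonunits_iff, ← IsLocalRing.mem_maximalIdeal, ← ker_toZMod, RingHom.mem_ker,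
    RingHom.map_det] at hu
  exact hA hu

lemma Padic.norm_det_eq_one_of_norm_sub_lt_one_s15 {ι : Type*} [Fintype ι] [DecidableEq ι]
    (M : Matrix ι ι ℚ_[p]) (N : Matrix ι ι ℤ) (hMN : ∀ i j, ‖M i j - N i j‖ < 1)
    (hN : (N.map (Int.castRingHom (ZMod p))).det ≠ 0) : ‖M.det‖ = 1 := by
  have hM : ∀ i j, ‖M i j‖ ≤ 1 := fun i j => by
    rw [← sub_add_cancel (M i j) (N i j)]
    exact (IsUltrametricDist.norm_add_le_max _ _).trans
      (max_le (hMN i j).le (Padic.norm_int_le_one _))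
  let A : Matrix ι ι ℤ_[p] := Matrix.of fun i j => ⟨M i j, hM i j⟩
  have hAM : A.map PadicInt.Coe.ringHom = M := rfl
  have hAN : A.map PadicInt.toZMod = N.map (Int.castRingHom (ZMod p)) := by
    ext i j
    simpa using PadicInt.toZMod_eq_of_norm_sub_lt_one (x := A i j) (y := N i j) (hMN i j)
  calc ‖M.det‖ = ‖A.det‖ := by
        rw [← hAM, ← RingHom.mapMatrix_apply, ← RingHom.map_det]; rfl
    _ = 1 := PadicInt.norm_det_eq_one A (hAN ▸ hN)

lemma ne_zero_and_padicValRat_eq_zero_of_norm_eq_one {q : ℚ} (hq : ‖(q : ℚ_[p])‖ = 1) :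
    q ≠ 0 ∧ padicValRat p q = 0 := by
  have hq0 : q ≠ 0 := by rintro rfl; simp at hq
  refine ⟨hq0, ?_⟩
  rw [Padic.norm_eq_zpow_neg_valuation (by exact_mod_cast hq0), Padic.valuation_ratCast] at hq
  have := (zpow_eq_one_iff_right₀ (by positivity) (Nat.one_lt_cast.mpr hp.out.one_lt).ne').mp hq
  omega

end Padic

lemma Matrix.det_of_pow_two_mul_add_one_ne_zero {R : Type*} [CommRing R] [IsDomain R] {k : ℕ}
    (x : Fin k → R) (hx0 : ∀ v, x v ≠ 0) (hx : Function.Injective (x · ^ 2)) :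
    (Matrix.of fun j v : Fin k => x v ^ (2 * j.val + 1)).det ≠ 0 := by
  have : (Matrix.of fun j v : Fin k => x v ^ (2 * j.val + 1)) =
      Matrix.of fun j v => x v * (Matrix.vandermonde (x · ^ 2)).transpose j v := by
    ext j v
    simp only [Matrix.of_apply, Matrix.transpose_apply, Matrix.vandermonde_apply]
    ring
  rw [this, Matrix.det_mul_row, Matrix.det_transpose]
  exact mul_ne_zero (prod_ne_zero_iff.mpr fun v _ => hx0 v)
    (Matrix.det_vandermonde_ne_zero_iff.mpr hx)

lemma ZMod.det_of_natCast_succ_pow_ne_zero {p : ℕ} [Fact p.Prime] (t : ℕ) :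
    (Matrix.of fun j v : Fin ((p - 1) / 2) =>
      ((v.val + 1 : ℕ) : ZMod p) ^ ((2 * j.val + 1) * p ^ t)).det ≠ 0 := by
  simp only [pow_mul _ _ (p ^ t), ZMod.pow_card_pow]
  refine Matrix.det_of_pow_two_mul_add_one_ne_zero _ (fun v => ?_) (fun v w hvw => ?_)
  · rw [Ne, ZMod.natCast_eq_zero_iff]
    exact Nat.not_dvd_of_pos_of_lt v.val.succ_pos (by omega)
  · have hv := v.isLt
    have hw := w.isLt
    rcases sq_eq_sq_iff_eq_or_eq_neg.mp hvw with h | h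
    · rw [ZMod.natCast_eq_natCast_iff', Nat.mod_eq_of_lt (by omega),
        Nat.mod_eq_of_lt (by omega)] at h
      exact Fin.ext (by omega)
    · rw [eq_neg_iff_add_eq_zero, ← Nat.cast_add, ZMod.natCast_eq_zero_iff] at h
      exact absurd h (Nat.not_dvd_of_pos_of_lt (by omega) (by omega))

theorem det_odd_bernoulli_padic_general (p t : ℕ) (hp : p.Prime) (hodd : Odd p) :
    Matrix.det (Matrix.of fun j v : Fin ((p - 1) / 2) =>
      (p : ℚ) ^ ((2 * (j.val + 1) - 1) * p ^ t) *
        ((Polynomial.bernoulli ((2 * (j.val + 1) - 1) * p ^ t)).eval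
            (((v.val + 1 : ℕ) : ℚ) / (p : ℚ)) -
          bernoulli ((2 * (j.val + 1) - 1) * p ^ t))) ≠ 0 ∧
    padicValRat p
      (Matrix.det (Matrix.of fun j v : Fin ((p - 1) / 2) =>
        (p : ℚ) ^ ((2 * (j.val + 1) - 1) * p ^ t) *
          ((Polynomial.bernoulli ((2 * (j.val + 1) - 1) * p ^ t)).eval
              (((v.val + 1 : ℕ) : ℚ) / (p : ℚ)) -
            bernoulli ((2 * (j.val + 1) - 1) * p ^ t)))) = 0 := by
  have := Fact.mk hp
  have hp2 : p ≠ 2 := by rintro rfl; exact Nat.not_odd_iff_even.mpr even_two hodd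
  have hexp (j : Fin ((p - 1) / 2)) : 2 * (j.val + 1) - 1 = 2 * j.val + 1 := by omega
  apply ne_zero_and_padicValRat_eq_zero_of_norm_eq_one
  rw [← Rat.coe_castHom, RingHom.map_det]
  refine Padic.norm_det_eq_one_of_norm_sub_lt_one_s15 _
    (Matrix.of fun j v => ((v.val + 1 : ℕ) : ℤ) ^ ((2 * (j.val + 1) - 1) * p ^ t))
    (fun j v => ?_) ?_
  · simpa using Padic.norm_pow_mul_bernoulli_eval_div_sub_sub_lt_one hp2 (v.val + 1)
      (n := (2 * (j.val + 1) - 1) * p ^ t) (mul_ne_zero (by omega) (pow_ne_zero _ hp.ne_zero))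
  · convert ZMod.det_of_natCast_succ_pow_ne_zero (p := p) t using 2
    ext j v
    simp [hexp]

/-- Let `p` be an odd prime, `k = (p−1)/2`, `t ≥ 1`. The determinant of the `k × k` matrix
with (1-indexed) `(j,v)` entry `p^{(2j−1)p^t}(B_{(2j−1)p^t}(v/p) − B_{(2j−1)p^t})` is a
nonzero rational number with `p`-adic valuation `0`. -/
theorem det_odd_bernoulli_padic (p t : ℕ) (hp : p.Prime) (hodd : Odd p) (ht : 1 ≤ t) :
    Matrix.det (Matrix.of fun j v : Fin ((p - 1) / 2) =>
      (p : ℚ) ^ ((2 * (j.val + 1) - 1) * p ^ t) *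
        ((Polynomial.bernoulli ((2 * (j.val + 1) - 1) * p ^ t)).eval
            (((v.val + 1 : ℕ) : ℚ) / (p : ℚ)) -
          bernoulli ((2 * (j.val + 1) - 1) * p ^ t))) ≠ 0 ∧
    padicValRat p
      (Matrix.det (Matrix.of fun j v : Fin ((p - 1) / 2) =>
        (p : ℚ) ^ ((2 * (j.val + 1) - 1) * p ^ t) *
          ((Polynomial.bernoulli ((2 * (j.val + 1) - 1) * p ^ t)).eval
              (((v.val + 1 : ℕ) : ℚ) / (p : ℚ)) -
            bernoulli ((2 * (j.val + 1) - 1) * p ^ t)))) = 0 :=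
  det_odd_bernoulli_padic_general p t hp hodd
end
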